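/- arXiv:1105.5620 — 2 statements merged into one kernel-verified Lean document; each statement's English description precedes it below -/
import Mathlib

section
/- Let F, F_1, F_2, … ∈ B_c(T) and suppose ‖f_j − f‖_T → 0 as j → ∞, i.e. sup{ |(F_j(β) − F(β)) − (F_j(α) − F(α))| : α ≤ β ≤ α + 2π } → 0. Then for each fixed n ∈ ℤ, the Fourier coefficients converge: f̂_j(n) → f̂(n) as j → ∞, where f̂_j(n) = (−1)^n F_j(π) + i n ∫_{−π}^{π} F_j(t) e^{−int} dt and f̂(n) = (−1)^n F(π) + i n ∫_{−π}^{π} F(t) e^{−int} dt. -/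
/-!
Put `G = F_j - F`. Since `G (-π) = 0`, taking `α = -π` in the Alexiewicz norm bounds `‖G t‖` on
`[-π, π]` by `‖g_j‖_T`, and `ĝ_j(n) = f̂_j(n) - f̂(n)` is then at most `(1 + 2π|n|) ‖g_j‖_T`.
The only subtlety is that the supremum defining the norm is finite, which follows from continuity
of `G` together with `G (x + 2π) = G x + G π`: every admissible pair `α ≤ β ≤ α + 2π` can be
shifted by a multiple of `2π` into a fixed compact interval without changing `G β - G α`.
-/

open MeasureTheory Real Filter Set

theorem map_add_zsmul_of_map_add {α β : Type*} [AddGroup α] [AddGroup β] {G : α → β} {p : α}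
    {c : β} (h : ∀ x, G (x + p) = G x + c) (k : ℤ) (x : α) : G (x + k • p) = G x + k • c := by
  induction k using Int.induction_on with
  | zero => simp
  | succ k ih => rw [add_one_zsmul, ← add_assoc, h, ih, add_one_zsmul, add_assoc]
  | pred k ih =>
    have h' : G (x + (-k : ℤ) • p - p) = G (x + (-k : ℤ) • p) - c := by
      rw [eq_sub_iff_add_eq, ← h, sub_add_cancel]
    rw [sub_one_zsmul, sub_one_zsmul, ← sub_eq_add_neg, ← sub_eq_add_neg, ← add_sub_assoc, h', ih,
      add_sub_assoc]

theorem map_sub_map_eq_of_map_add {α β : Type*} [AddGroup α] [AddCommGroup β] {G : α → β}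
    {p : α} {c : β} (h : ∀ x, G (x + p) = G x + c) (k : ℤ) (x y : α) :
    G (y - k • p) - G (x - k • p) = G y - G x := by
  rw [← sub_add_cancel y (k • p), ← sub_add_cancel x (k • p), map_add_zsmul_of_map_add h,
    map_add_zsmul_of_map_add h, sub_add_cancel, sub_add_cancel, add_sub_add_right_eq_sub]

theorem bddAbove_norm_sub_of_map_add {E : Type*} [SeminormedAddCommGroup E] {G : ℝ → E}
    (hG : Continuous G) {p : ℝ} {c : E} (hp : 0 < p) (h : ∀ x, G (x + p) = G x + c) (L : ℝ) :
    BddAbove {r : ℝ | ∃ α β : ℝ, α ≤ β ∧ β ≤ α + L ∧ r = ‖G β - G α‖} := by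
  obtain ⟨M, hM⟩ :=
    (isCompact_Icc (a := 0) (b := p + L)).exists_bound_of_continuousOn hG.continuousOn
  refine ⟨M + M, ?_⟩
  rintro _ ⟨α, β, hαβ, hβα, rfl⟩
  set k := toIcoDiv hp 0 α
  obtain ⟨hα₀, hαp⟩ := sub_toIcoDiv_zsmul_mem_Ico hp 0 α
  rw [← map_sub_map_eq_of_map_add h k]
  refine (norm_sub_le _ _).trans (add_le_add (hM _ ⟨?_, ?_⟩) (hM _ ⟨hα₀, ?_⟩)) <;>
    linarith

/-- The Alexiewicz norm `‖G'‖_T` of the distribution whose primitive is `G`. Unless the set is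
bounded above, `sSup` returns the junk value `0`. -/
noncomputable def alexiewiczNorm {E : Type*} [SeminormedAddCommGroup E] (G : ℝ → E) : ℝ :=
  sSup {r : ℝ | ∃ α β : ℝ, α ≤ β ∧ β ≤ α + 2 * π ∧ r = ‖G β - G α‖}

theorem norm_le_alexiewiczNorm {E : Type*} [SeminormedAddCommGroup E] {G : ℝ → E}
    (hG : Continuous G) (hG₀ : G (-π) = 0) (hper : ∀ x, G (x + 2 * π) = G x + G π) {t : ℝ}
    (ht : t ∈ Icc (-π) π) : ‖G t‖ ≤ alexiewiczNorm G :=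
  le_csSup (bddAbove_norm_sub_of_map_add hG (by positivity) hper _)
    ⟨-π, t, ht.1, by linarith [ht.2], by rw [hG₀, sub_zero]⟩

/-- `f̂(n)` for `f = F'`: the integral of `f(t) e^{-int}` after integrating by parts. -/
noncomputable def primitiveFourierCoeff (F : ℝ → ℂ) (n : ℤ) : ℂ :=
  (-1 : ℂ) ^ n * F π + Complex.I * (n : ℂ) *
    ∫ t in (-π)..π, F t * Complex.exp (-Complex.I * (n : ℂ) * (t : ℂ))

theorem primitiveFourierCoeff_sub {F G : ℝ → ℂ} (hF : Continuous F) (hG : Continuous G) (n : ℤ) :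
    primitiveFourierCoeff F n - primitiveFourierCoeff G n = primitiveFourierCoeff (F - G) n := by
  have hint : ∀ H : ℝ → ℂ, Continuous H → IntervalIntegrable
      (fun t : ℝ => H t * Complex.exp (-Complex.I * (n : ℂ) * (t : ℂ))) volume (-π) π :=
    fun H hH => (hH.mul (by fun_prop)).intervalIntegrable _ _
  simp only [primitiveFourierCoeff, Pi.sub_apply, sub_mul,
    intervalIntegral.integral_sub (hint F hF) (hint G hG)]
  ring

theorem norm_primitiveFourierCoeff_le {G : ℝ → ℂ} {A : ℝ} (hA : ∀ t ∈ Icc (-π) π, ‖G t‖ ≤ A)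
    (n : ℤ) : ‖primitiveFourierCoeff G n‖ ≤ (1 + 2 * π * |(n : ℝ)|) * A := by
  have hintegrand : ∀ t ∈ uIoc (-π) π,
      ‖G t * Complex.exp (-Complex.I * (n : ℂ) * (t : ℂ))‖ ≤ A := by
    intro t ht
    rw [uIoc_of_le (by linarith [pi_pos])] at ht
    have hexp : ‖Complex.exp (-Complex.I * (n : ℂ) * (t : ℂ))‖ = 1 := by
      rw [Complex.norm_exp]; simp
    rw [norm_mul, hexp, mul_one]
    exact hA t (Ioc_subset_Icc_self ht)
  have hintegral := intervalIntegral.norm_integral_le_of_norm_le_const hintegrand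
  rw [show |π - -π| = 2 * π by rw [abs_of_pos (by linarith [pi_pos])]; ring] at hintegral
  calc ‖primitiveFourierCoeff G n‖
      ≤ ‖G π‖ + |(n : ℝ)| * ‖∫ t in (-π)..π, G t * Complex.exp (-Complex.I * n * t)‖ := by
        refine (norm_add_le _ _).trans_eq ?_
        simp [norm_zpow]
    _ ≤ A + |(n : ℝ)| * (A * (2 * π)) := by
        gcongr
        exact hA π ⟨by linarith [pi_pos], le_rfl⟩
    _ = (1 + 2 * π * |(n : ℝ)|) * A := by ring

/-- If `F, F_j ∈ B_c(𝕋)` and `‖f_j − f‖_𝕋 → 0`, then for each fixed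
`n ∈ ℤ` the Fourier coefficients converge: `f̂_j(n) → f̂(n)`. -/
theorem fourier_coeff_tendsto_of_alexiewicz_tendsto (F : ℝ → ℂ) (Fj : ℕ → ℝ → ℂ)
    (hFcont : Continuous F) (hF0 : F (-π) = 0)
    (hFper : ∀ x : ℝ, F (x + 2 * π) = F x + F π)
    (hFjcont : ∀ j, Continuous (Fj j)) (hFj0 : ∀ j, Fj j (-π) = 0)
    (hFjper : ∀ j, ∀ x : ℝ, Fj j (x + 2 * π) = Fj j x + Fj j π)
    (hconv : Tendsto (fun j : ℕ =>
        sSup {r : ℝ | ∃ α β : ℝ, α ≤ β ∧ β ≤ α + 2 * π ∧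
          r = ‖(Fj j β - F β) - (Fj j α - F α)‖}) atTop (nhds 0)) :
    ∀ n : ℤ, Tendsto (fun j : ℕ =>
        (-1 : ℂ) ^ n * Fj j π + Complex.I * (n : ℂ) *
          ∫ t in (-π)..π, Fj j t * Complex.exp (-Complex.I * (n : ℂ) * (t : ℂ)))
      atTop
      (nhds ((-1 : ℂ) ^ n * F π + Complex.I * (n : ℂ) *
        ∫ t in (-π)..π, F t * Complex.exp (-Complex.I * (n : ℂ) * (t : ℂ)))) := by
  intro n
  have hnorm : Tendsto (fun j => alexiewiczNorm (Fj j - F)) atTop (nhds 0) := hconv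
  have hbound : ∀ j, ∀ t ∈ Icc (-π) π, ‖(Fj j - F) t‖ ≤ alexiewiczNorm (Fj j - F) :=
    fun j _ => norm_le_alexiewiczNorm ((hFjcont j).sub hFcont)
      (by simp [hFj0 j, hF0]) (fun x => by simp only [Pi.sub_apply, hFjper j x, hFper x]; abel)
  change Tendsto (fun j => primitiveFourierCoeff (Fj j) n) atTop
    (nhds (primitiveFourierCoeff F n))
  rw [tendsto_iff_norm_sub_tendsto_zero]
  refine squeeze_zero (fun _ => norm_nonneg _) (fun j => ?_)
    (by simpa only [mul_zero] using hnorm.const_mul (1 + 2 * π * |(n : ℝ)|))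
  rw [primitiveFourierCoeff_sub (hFjcont j) hFcont]
  exact norm_primitiveFourierCoeff_le (hbound j) n
end

section
/- Uniqueness theorem: let F ∈ B_c(T) and suppose all Fourier coefficients of f = F′ vanish, i.e. (−1)^n F(π) + i n ∫_{−π}^{π} F(t) e^{−int} dt = 0 for every n ∈ ℤ. Then F is identically zero (equivalently, f = 0). -/
/-!
Taking `n = 0` gives `F π = 0`, so `F` is `2π`-periodic and descends to a continuous function on
the circle. For `n ≠ 0` the hypothesis then says that its `n`-th Fourier coefficient vanishes.
A continuous function whose Fourier coefficients are finitely supported is the sum of its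
Fourier series, so `F` is constant, and `F (-π) = 0` forces that constant to be `0`.
-/

open MeasureTheory Real AddCircle

local instance : Fact (0 < 2 * π) := ⟨two_pi_pos⟩

theorem ContinuousMap.apply_eq_fourierCoeff_zero {T : ℝ} [Fact (0 < T)]
    (f : C(AddCircle T, ℂ)) (hf : ∀ n ≠ 0, fourierCoeff f n = 0) (x : AddCircle T) :
    f x = fourierCoeff f 0 := by
  have hsum : HasSum (fun n ↦ fourierCoeff f n • fourier n x) (fourierCoeff f 0) := by
    simpa using hasSum_single (f := fun n ↦ fourierCoeff f n • fourier n x) 0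
      fun n hn ↦ by simp [hf n hn]
  have hsummable : Summable (fourierCoeff f) :=
    (hasSum_single 0 hf).summable
  exact (has_pointwise_sum_fourier_series_of_summable hsummable x).unique hsum

theorem fourier_coe_apply_two_pi (n : ℤ) (x : ℝ) :
    fourier n (x : AddCircle (2 * π)) = Complex.exp (Complex.I * n * x) := by
  rw [fourier_coe_apply]
  congr 1
  field_simp
  push_cast
  ring

theorem Function.Periodic.fourierCoeff_lift_two_pi {F : ℝ → ℂ} (hF : F.Periodic (2 * π))
    (n : ℤ) (a : ℝ) :
    fourierCoeff hF.lift n =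
      (1 / (2 * π)) • ∫ t in a..a + 2 * π, F t * Complex.exp (-Complex.I * n * t) := by
  rw [fourierCoeff_eq_intervalIntegral _ n a]
  congr 1
  refine intervalIntegral.integral_congr fun t _ ↦ ?_
  rw [fourier_coe_apply_two_pi, smul_eq_mul, mul_comm]
  simp [Function.Periodic.lift_coe]

/-- Uniqueness theorem: if `F ∈ B_c(𝕋)` and all Fourier
coefficients of `f = F'` vanish, then `F` is identically zero. -/
theorem fourier_coeff_all_zero_implies_zero (F : ℝ → ℂ)
    (hFcont : Continuous F) (hF0 : F (-π) = 0)
    (hFper : ∀ x : ℝ, F (x + 2 * π) = F x + F π)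
    (hcoef : ∀ n : ℤ, (-1 : ℂ) ^ n * F π + Complex.I * (n : ℂ) *
        (∫ t in (-π)..π, F t * Complex.exp (-Complex.I * (n : ℂ) * (t : ℂ))) = 0) :
    ∀ x : ℝ, F x = 0 := by
  have hFπ : F π = 0 := by simpa using hcoef 0
  have hper : F.Periodic (2 * π) := fun x ↦ by rw [hFper x, hFπ, add_zero]
  let g : C(AddCircle (2 * π), ℂ) := ⟨hper.lift, hFcont.quotient_liftOn' _⟩
  have hg : ∀ n ≠ 0, fourierCoeff g n = 0 := fun n hn ↦ by
    have hcoef_n := hcoef n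
    rw [hFπ, mul_zero, zero_add, mul_eq_zero] at hcoef_n
    have hint := hcoef_n.resolve_left (mul_ne_zero Complex.I_ne_zero (Int.cast_ne_zero.mpr hn))
    change fourierCoeff hper.lift n = 0
    rw [hper.fourierCoeff_lift_two_pi n (-π), show -π + 2 * π = π by ring, hint, smul_zero]
  intro x
  calc F x = fourierCoeff g 0 := g.apply_eq_fourierCoeff_zero hg x
    _ = F (-π) := (g.apply_eq_fourierCoeff_zero hg (-π : ℝ)).symm
    _ = 0 := hF0
end
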